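/- Let B, N > 0 and C > R be real constants with C − R > e^{−3}/(2 ln 2), let Φ(x) = ((C − R)·B·N·x + (1/2)·log₂(B·N·x)) / (log₂ e · √(B·N·x)) for x > 0, and let Q(x) = ∫_x^∞ (1/√(2π)) e^{−t²/2} dt. Then for every P ∈ (0, 1) there exists a unique t > 0 satisfying Q(Φ(t)) = 1 − P, namely t = Φ⁻¹(Q⁻¹(1 − P)); moreover this unique solution t is a strictly increasing function of P on (0, 1). -/

import Mathlib

/-!
`Q` is the tail integral of the standard normal density, hence a continuous strictly decreasing
map of `ℝ` onto `(0, 1)`. Substituting `u = √(B N x)` turns `Φ` into `u ↦ a u + log u / u` with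
`a = (C - R) log 2`, whose derivative `a + (1 - log u) / u²` is positive because
`(1 - log u) / u² ≥ -e⁻³ / 2` (equality at `u = e^{3/2}`). As it tends to `-∞` at `0⁺` and to `∞`
at `∞`, `Φ` is a strictly increasing map of `(0, ∞)` onto `ℝ`. So `Q ∘ Φ` is a strictly
decreasing bijection of `(0, ∞)` onto `(0, 1)`, which gives existence, uniqueness and
monotonicity in `P` of the solution of `Q (Φ t) = 1 - P`.
-/

open MeasureTheory Set Filter Real Topology ProbabilityTheory

section TailIntegral

variable {f : ℝ → ℝ}

theorem continuous_integral_Ioi (hf : Integrable f) : Continuous fun x => ∫ t in Ioi x, f t := by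
  have h : (fun x => ∫ t in Ioi x, f t) = fun x => (∫ t in Ioi 0, f t) - ∫ t in 0..x, f t :=
    funext fun x => eq_sub_of_add_eq' <|
      intervalIntegral.integral_interval_add_Ioi hf.integrableOn hf.integrableOn
  rw [h]
  exact continuous_const.sub (hf.continuous_primitive 0)

theorem strictAnti_integral_Ioi (hf : Integrable f) (hpos : ∀ t, 0 < f t) :
    StrictAnti fun x => ∫ t in Ioi x, f t := by
  intro u v huv
  have hdiff := intervalIntegral.integral_Ioi_sub_Ioi hf.integrableOn huv.le
  have hpos' : 0 < ∫ t in u..v, f t :=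
    intervalIntegral.intervalIntegral_pos_of_pos_on hf.intervalIntegrable (fun t _ => hpos t) huv
  linarith

theorem tendsto_integral_Ioi_atBot (hf : Integrable f) :
    Tendsto (fun x => ∫ t in Ioi x, f t) atBot (𝓝 (∫ t, f t)) := by
  have h := (tendsto_integral_Iic_zero (f := f) (μ := volume) tendsto_id).const_sub (∫ t, f t)
  rw [sub_zero] at h
  refine h.congr fun x => ?_
  rw [← intervalIntegral.integral_Iic_add_Ioi hf.integrableOn hf.integrableOn, id]
  ring

theorem exists_integral_Ioi_eq (hf : Integrable f) {y : ℝ} (h0 : 0 < y) (h1 : y < ∫ t, f t) :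
    ∃ x, ∫ t in Ioi x, f t = y :=
  intermediate_value_univ₂_eventually₂ (l₁ := atTop) (l₂ := atBot) (continuous_integral_Ioi hf)
    continuous_const
    ((tendsto_integral_Ioi_zero tendsto_id).eventually (eventually_le_nhds h0))
    ((tendsto_integral_Ioi_atBot hf).eventually (eventually_ge_nhds h1))

end TailIntegral

theorem gaussianPDFReal_zero_one (t : ℝ) :
    gaussianPDFReal 0 1 t = 1 / √(2 * π) * exp (-t ^ 2 / 2) := by
  simp [gaussianPDFReal]

theorem neg_exp_neg_three_div_two_le_one_sub_log_div_sq {u : ℝ} (hu : 0 < u) :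
    -(exp (-3) / 2) ≤ (1 - log u) / u ^ 2 := by
  have h := log_le_sub_one_of_pos (show 0 < u ^ 2 * exp (-3) by positivity)
  rw [log_mul (by positivity) (exp_ne_zero _), log_exp, log_pow] at h
  rw [le_div_iff₀ (by positivity)]
  push_cast at h
  linarith

section MulAddLogDiv

variable {a : ℝ}

theorem continuousOn_mul_add_log_div : ContinuousOn (fun u => a * u + log u / u) (Ioi 0) := by
  fun_prop (disch := exact fun x hx => ne_of_gt hx)

theorem strictMonoOn_mul_add_log_div (ha : exp (-3) / 2 < a) :
    StrictMonoOn (fun u => a * u + log u / u) (Ioi 0) := by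
  refine strictMonoOn_of_hasDerivWithinAt_pos (convex_Ioi 0)
    (f' := fun u => a + (1 - log u) / u ^ 2) continuousOn_mul_add_log_div (fun u hu => ?_)
    (fun u hu => ?_)
  · rw [interior_Ioi] at hu
    have hu0 : u ≠ 0 := (mem_Ioi.1 hu).ne'
    have hd : HasDerivAt (fun u => a * u + log u / u) (a * 1 + (u⁻¹ * u - log u * 1) / u ^ 2) u :=
      ((hasDerivAt_id' u).const_mul a).add ((hasDerivAt_log hu0).div (hasDerivAt_id' u) hu0)
    exact hd.hasDerivWithinAt.congr_deriv (by rw [inv_mul_cancel₀ hu0, mul_one, mul_one])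
  · rw [interior_Ioi] at hu
    linarith [neg_exp_neg_three_div_two_le_one_sub_log_div_sq (mem_Ioi.1 hu)]

theorem tendsto_mul_add_log_div_atTop (ha : 0 < a) :
    Tendsto (fun u => a * u + log u / u) atTop atTop := by
  refine tendsto_atTop_mono' atTop ?_ (tendsto_id.const_mul_atTop ha)
  filter_upwards [eventually_ge_atTop 1] with u hu
  have : 0 ≤ log u / u := div_nonneg (log_nonneg hu) (by linarith)
  simp only [id]
  linarith

theorem tendsto_mul_add_log_div_nhdsGT_zero :
    Tendsto (fun u => a * u + log u / u) (𝓝[>] 0) atBot := by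
  have hlin : Tendsto (fun u => a * u) (𝓝[>] 0) (𝓝 (a * 0)) :=
    (continuous_const_mul a).continuousWithinAt.tendsto
  simp only [div_eq_mul_inv]
  exact hlin.add_atBot (tendsto_log_nhdsGT_zero.atBot_mul_atTop₀ tendsto_inv_nhdsGT_zero)

theorem surjOn_mul_add_log_div (ha : 0 < a) :
    SurjOn (fun u => a * u + log u / u) (Ioi 0) univ := by
  intro z _
  have hcont : Continuous fun s => a * exp s + log (exp s) / exp s :=
    continuousOn_mul_add_log_div.comp_continuous continuous_exp exp_pos
  obtain ⟨s, hs⟩ := hcont.surjective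
    ((tendsto_mul_add_log_div_atTop ha).comp tendsto_exp_atTop)
    (tendsto_mul_add_log_div_nhdsGT_zero.comp tendsto_exp_atBot_nhdsGT) z
  exact ⟨exp s, exp_pos s, hs⟩

end MulAddLogDiv

theorem add_half_logb_div_logb_exp_mul_sqrt (c : ℝ) {y : ℝ} (hy : 0 < y) :
    (c * y + 1 / 2 * logb 2 y) / (logb 2 (exp 1) * √y) = c * log 2 * √y + log √y / √y := by
  have hlog : log y = 2 * log √y := by rw [log_sqrt hy.le]; ring
  rw [logb, logb, log_exp, hlog]
  nth_rewrite 1 [← sq_sqrt hy.le]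
  field_simp

section SqrtConstMul

variable {k : ℝ}

theorem mapsTo_sqrt_const_mul (hk : 0 < k) : MapsTo (fun x => √(k * x)) (Ioi 0) (Ioi 0) :=
  fun _ hx => sqrt_pos.2 (mul_pos hk hx)

theorem strictMonoOn_sqrt_const_mul (hk : 0 < k) : StrictMonoOn (fun x => √(k * x)) (Ioi 0) :=
  fun _ hx _ _ hxy => sqrt_lt_sqrt (mul_pos hk hx).le (mul_lt_mul_of_pos_left hxy hk)

theorem surjOn_sqrt_const_mul (hk : 0 < k) : SurjOn (fun x => √(k * x)) (Ioi 0) (Ioi 0) := by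
  intro u hu
  refine ⟨u ^ 2 / k, div_pos (pow_pos hu 2) hk, ?_⟩
  simp only [mul_div_cancel₀ _ hk.ne', sqrt_sq (le_of_lt hu)]

end SqrtConstMul

theorem stmt_4_general (B N C R : ℝ) (hB : 0 < B) (hN : 0 < N)
    (h : Real.exp (-3) / (2 * Real.log 2) < C - R)
    (Φ : ℝ → ℝ)
    (hΦ : ∀ x : ℝ, Φ x =
      ((C - R) * B * N * x + (1 / 2) * Real.logb 2 (B * N * x)) /
        (Real.logb 2 (Real.exp 1) * Real.sqrt (B * N * x)))
    (Q : ℝ → ℝ)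
    (hQ : ∀ x : ℝ, Q x =
      ∫ t in Set.Ioi x, (1 / Real.sqrt (2 * Real.pi)) * Real.exp (-t ^ 2 / 2)) :
    (∀ P : ℝ, P ∈ Set.Ioo (0 : ℝ) 1 → ∃! t : ℝ, 0 < t ∧ Q (Φ t) = 1 - P) ∧
    (∀ P₁ P₂ : ℝ, P₁ ∈ Set.Ioo (0 : ℝ) 1 → P₂ ∈ Set.Ioo (0 : ℝ) 1 → P₁ < P₂ →
      ∀ t₁ t₂ : ℝ, (0 < t₁ ∧ Q (Φ t₁) = 1 - P₁) → (0 < t₂ ∧ Q (Φ t₂) = 1 - P₂) →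
        t₁ < t₂) := by
  have hk : 0 < B * N := mul_pos hB hN
  have ha : exp (-3) / 2 < (C - R) * log 2 := by
    have := (div_lt_iff₀ (by positivity : 0 < 2 * log 2)).1 h
    linarith
  have hΦg : EqOn Φ ((fun u => (C - R) * log 2 * u + log u / u) ∘ fun x => √(B * N * x))
      (Ioi 0) := fun x hx => by
    rw [hΦ, show (C - R) * B * N * x = (C - R) * (B * N * x) by ring]
    exact add_half_logb_div_logb_exp_mul_sqrt _ (mul_pos hk hx)
  have hΦmono : StrictMonoOn Φ (Ioi 0) :=
    ((strictMonoOn_mul_add_log_div ha).comp (strictMonoOn_sqrt_const_mul hk)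
      (mapsTo_sqrt_const_mul hk)).congr hΦg.symm
  have hΦsurj : SurjOn Φ (Ioi 0) univ :=
    ((surjOn_mul_add_log_div ((half_pos (exp_pos _)).trans ha)).comp
      (surjOn_sqrt_const_mul hk)).congr hΦg.symm
  have hQ' : Q = fun x => ∫ t in Ioi x, gaussianPDFReal 0 1 t :=
    funext fun x => by simp only [hQ, gaussianPDFReal_zero_one]
  have hQΦ : StrictAntiOn (Q ∘ Φ) (Ioi 0) :=
    (hQ' ▸ strictAnti_integral_Ioi (integrable_gaussianPDFReal 0 1)
      (gaussianPDFReal_pos 0 1 · one_ne_zero)).comp_strictMonoOn hΦmono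
  refine ⟨fun P hP => ?_, fun P₁ P₂ _ _ hP t₁ t₂ ⟨ht₁, hQt₁⟩ ⟨ht₂, hQt₂⟩ => ?_⟩
  · obtain ⟨x, hx⟩ : ∃ x, Q x = 1 - P := hQ' ▸ exists_integral_Ioi_eq
      (integrable_gaussianPDFReal 0 1) (by linarith [hP.2])
      (by rw [integral_gaussianPDFReal_eq_one 0 one_ne_zero]; linarith [hP.1])
    obtain ⟨t, ht, hΦt⟩ := hΦsurj (mem_univ x)
    refine ⟨t, ⟨ht, by rw [hΦt, hx]⟩, fun s ⟨hs, hQs⟩ => hQΦ.injOn hs ht ?_⟩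
    simp only [Function.comp_apply, hQs, hΦt, hx]
  · exact (hQΦ.lt_iff_gt ht₂ ht₁).1 (by simp only [Function.comp_apply, hQt₁, hQt₂]; linarith)

/-- Lemma 2 of the paper: for every success probability `P ∈ (0,1)` there is a
unique positive latency `t` with `Q(Φ(t)) = 1 − P`, and this unique solution is
strictly increasing in `P`. -/
theorem stmt_4 (B N C R : ℝ) (hB : 0 < B) (hN : 0 < N) (hCR : R < C)
    (h : Real.exp (-3) / (2 * Real.log 2) < C - R)
    (Φ : ℝ → ℝ)
    (hΦ : ∀ x : ℝ, Φ x =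
      ((C - R) * B * N * x + (1 / 2) * Real.logb 2 (B * N * x)) /
        (Real.logb 2 (Real.exp 1) * Real.sqrt (B * N * x)))
    (Q : ℝ → ℝ)
    (hQ : ∀ x : ℝ, Q x =
      ∫ t in Set.Ioi x, (1 / Real.sqrt (2 * Real.pi)) * Real.exp (-t ^ 2 / 2)) :
    (∀ P : ℝ, P ∈ Set.Ioo (0 : ℝ) 1 → ∃! t : ℝ, 0 < t ∧ Q (Φ t) = 1 - P) ∧
    (∀ P₁ P₂ : ℝ, P₁ ∈ Set.Ioo (0 : ℝ) 1 → P₂ ∈ Set.Ioo (0 : ℝ) 1 → P₁ < P₂ →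
      ∀ t₁ t₂ : ℝ, (0 < t₁ ∧ Q (Φ t₁) = 1 - P₁) → (0 < t₂ ∧ Q (Φ t₂) = 1 - P₂) →
        t₁ < t₂) :=
  stmt_4_general B N C R hB hN h Φ hΦ Q hQ
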